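/- arXiv:1105.1208 — 4 statements merged into one kernel-verified Lean document; each statement's English description precedes it below -/
import Mathlib

section
/- Let Λ be a row-finite k-graph with no sources and let χ be a maximal tail of Λ. Then for every v ∈ χ there is μ ∈ vΛ such that d(μ)_i > 0 for all i = 1, …, k and s(μ) ∈ χ. -/
set_option autoImplicit false

open scoped Classical

/-- A `k`-graph: a countable small category together with a degree functor
`d : Λ → ℕ^k` satisfying the unique factorization property.  Paths (morphisms)
form a single type; vertices (objects) are identified with the paths of
degree `0`. -/
structure KGraph (k : ℕ) where
  /-- the type of paths (morphisms) of the `k`-graph -/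
  Path : Type
  countable : Countable Path
  nonempty : Nonempty Path
  /-- the range (codomain) vertex of a path -/
  r : Path → Path
  /-- the source (domain) vertex of a path -/
  s : Path → Path
  /-- composition: `comp lam mu` is the path `λμ`, meaningful when `s lam = r mu` -/
  comp : Path → Path → Path
  /-- the degree functor -/
  d : Path → Fin k → ℕ
  d_r : ∀ lam, d (r lam) = 0
  d_s : ∀ lam, d (s lam) = 0
  r_r : ∀ lam, r (r lam) = r lam
  s_r : ∀ lam, s (r lam) = r lam
  r_s : ∀ lam, r (s lam) = s lam
  s_s : ∀ lam, s (s lam) = s lam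
  id_comp : ∀ lam, comp (r lam) lam = lam
  comp_id : ∀ lam, comp lam (s lam) = lam
  r_comp : ∀ lam mu, s lam = r mu → r (comp lam mu) = r lam
  s_comp : ∀ lam mu, s lam = r mu → s (comp lam mu) = s mu
  d_comp : ∀ lam mu, s lam = r mu → d (comp lam mu) = d lam + d mu
  comp_assoc : ∀ lam mu nu, s lam = r mu → s mu = r nu →
    comp (comp lam mu) nu = comp lam (comp mu nu)
  /-- the unique factorization property -/
  factor : ∀ lam (m n : Fin k → ℕ), d lam = m + n →
    ∃! p : Path × Path, s p.1 = r p.2 ∧ comp p.1 p.2 = lam ∧ d p.1 = m ∧ d p.2 = n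

namespace KGraph

variable {k : ℕ}

/-- `v` is a vertex, i.e. an element of `Λ⁰`. -/
def IsVertex (Λ : KGraph k) (v : Λ.Path) : Prop := Λ.d v = 0

/-- `v ≤ w`, i.e. `vΛw ≠ ∅`. -/
def Conn (Λ : KGraph k) (v w : Λ.Path) : Prop := ∃ lam, Λ.r lam = v ∧ Λ.s lam = w

/-- the canonical generator `e i` of `ℕ^k`. -/
def eVec (k : ℕ) (i : Fin k) : Fin k → ℕ := Pi.single i 1

/-- `Λ` is row-finite: `vΛⁿ` is finite for every vertex `v` and `n ∈ ℕ^k`. -/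
def RowFinite (Λ : KGraph k) : Prop :=
  ∀ v, Λ.IsVertex v → ∀ n : Fin k → ℕ, {lam | Λ.r lam = v ∧ Λ.d lam = n}.Finite

/-- `Λ` has no sources: `vΛ^{e i} ≠ ∅` for every vertex `v` and `i`. -/
def NoSources (Λ : KGraph k) : Prop :=
  ∀ v, Λ.IsVertex v → ∀ i : Fin k, ∃ lam, Λ.r lam = v ∧ Λ.d lam = eVec k i

/-- the middle factor `λ(m,n)`: the unique `σ` such that `λ = μστ` with
`d μ = m`, `d σ = n - m`, `d τ = d λ - n` (junk value if no factorization exists). -/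
noncomputable def seg (Λ : KGraph k) (lam : Λ.Path) (m n : Fin k → ℕ) : Λ.Path :=
  if h : ∃ sig, ∃ mu tau, Λ.s mu = Λ.r sig ∧ Λ.s sig = Λ.r tau ∧
      Λ.comp (Λ.comp mu sig) tau = lam ∧ Λ.d mu = m ∧ Λ.d sig = n - m ∧
      Λ.d tau = Λ.d lam - n
  then h.choose else lam

/-- `Λ` has no local periodicity at the vertex `v`. -/
def NoLocalPeriodicity (Λ : KGraph k) (v : Λ.Path) : Prop :=
  ∀ m n : Fin k → ℕ, m ≠ n →
    ∃ lam, Λ.r lam = v ∧ m ⊔ n ≤ Λ.d lam ∧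
      Λ.seg lam m (m + Λ.d lam - (m ⊔ n)) ≠ Λ.seg lam n (n + Λ.d lam - (m ⊔ n))

/-- `Λ` is aperiodic: no vertex has local periodicity. -/
def Aperiodic (Λ : KGraph k) : Prop := ∀ v, Λ.IsVertex v → Λ.NoLocalPeriodicity v

/-- a hereditary set of vertices -/
def Hereditary (Λ : KGraph k) (H : Set Λ.Path) : Prop :=
  ∀ v ∈ H, ∀ w, Λ.Conn v w → w ∈ H

/-- a saturated set of vertices -/
def Saturated (Λ : KGraph k) (H : Set Λ.Path) : Prop :=
  ∀ v, Λ.IsVertex v → (∃ mu, Λ.r mu = v) →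
    (∃ i : Fin k, ∀ lam, Λ.r lam = v → Λ.d lam = eVec k i → Λ.s lam ∈ H) → v ∈ H

/-- the saturation of a set of vertices: the smallest saturated set containing it -/
def saturation (Λ : KGraph k) (H : Set Λ.Path) : Set Λ.Path :=
  ⋂₀ {K : Set Λ.Path | H ⊆ K ∧ Λ.Saturated K}

/-- no local periodicity at the vertex `v` of the quotient graph `Γ(Λ \ H)`
(whose paths are the paths of `Λ` with source outside `H`). -/
def QuotNoLocalPeriodicity (Λ : KGraph k) (H : Set Λ.Path) (v : Λ.Path) : Prop :=
  ∀ m n : Fin k → ℕ, m ≠ n →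
    ∃ lam, Λ.r lam = v ∧ Λ.s lam ∉ H ∧ m ⊔ n ≤ Λ.d lam ∧
      Λ.seg lam m (m + Λ.d lam - (m ⊔ n)) ≠ Λ.seg lam n (n + Λ.d lam - (m ⊔ n))

/-- `Λ` is strongly aperiodic: `Γ(Λ \ H)` is aperiodic for every saturated
hereditary proper subset `H ⊊ Λ⁰`. -/
def StronglyAperiodic (Λ : KGraph k) : Prop :=
  ∀ H : Set Λ.Path, (∀ v ∈ H, Λ.IsVertex v) → Λ.Hereditary H → Λ.Saturated H →
    H ≠ {v | Λ.IsVertex v} →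
    ∀ v, Λ.IsVertex v → v ∉ H → Λ.QuotNoLocalPeriodicity H v

/-- a maximal tail -/
def MaximalTail (Λ : KGraph k) (γ : Set Λ.Path) : Prop :=
  γ.Nonempty ∧ (∀ v ∈ γ, Λ.IsVertex v) ∧
  (∀ v₁ ∈ γ, ∀ v₂ ∈ γ, ∃ w ∈ γ, Λ.Conn v₁ w ∧ Λ.Conn v₂ w) ∧
  (∀ v ∈ γ, ∀ i : Fin k, ∃ f, Λ.r f = v ∧ Λ.d f = eVec k i ∧ Λ.s f ∈ γ) ∧
  (∀ v, Λ.IsVertex v → ∀ w ∈ γ, Λ.Conn v w → v ∈ γ)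

end KGraph


lemma vertex_fix {k : ℕ} (Λ : KGraph k) (v : Λ.Path) (hv : Λ.IsVertex v) :
    Λ.r v = v ∧ Λ.s v = v := by
  obtain ⟨p, hp, hu⟩ := Λ.factor v 0 0 (by rw [hv]; simp)
  have h1 := hu (Λ.r v, v) ⟨Λ.s_r v, Λ.id_comp v, Λ.d_r v, hv⟩
  have h2 := hu (v, Λ.s v) ⟨(Λ.r_s v).symm, Λ.comp_id v, hv, Λ.d_s v⟩
  have := h1.trans h2.symm
  exact ⟨congrArg Prod.fst this, (congrArg Prod.snd this).symm⟩

/-- Every vertex of a maximal tail emits a path of strictly positive degree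
with source in the tail. -/
theorem stmt10 {k : ℕ} (Λ : KGraph k) (hrf : Λ.RowFinite) (hns : Λ.NoSources)
    (χ : Set Λ.Path) (hχ : Λ.MaximalTail χ) (v : Λ.Path) (hv : v ∈ χ) :
    ∃ mu, Λ.r mu = v ∧ (∀ i : Fin k, 0 < Λ.d mu i) ∧ Λ.s mu ∈ χ := by
  obtain ⟨hne, hvert, hcof, hedge, hher⟩ := hχ
  have key : ∀ j : ℕ, j ≤ k → ∃ mu, Λ.r mu = v ∧
      (∀ i : Fin k, (i : ℕ) < j → 0 < Λ.d mu i) ∧ Λ.s mu ∈ χ := by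
    intro j
    induction j with
    | zero =>
      intro _
      obtain ⟨hr, hs⟩ := vertex_fix Λ v (hvert v hv)
      exact ⟨v, hr, fun i h => absurd h (Nat.not_lt_zero _), by rw [hs]; exact hv⟩
    | succ j ih =>
      intro hj
      obtain ⟨mu, hr, hpos, hs⟩ := ih (Nat.le_of_succ_le hj)
      obtain ⟨f, hfr, hfd, hfs⟩ := hedge (Λ.s mu) hs ⟨j, Nat.lt_of_succ_le hj⟩
      have hcomp : Λ.s mu = Λ.r f := hfr.symm
      refine ⟨Λ.comp mu f, by rw [Λ.r_comp mu f hcomp, hr], ?_, by rw [Λ.s_comp mu f hcomp]; exact hfs⟩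
      intro i hi
      rw [Λ.d_comp mu f hcomp]
      rcases Nat.lt_or_ge (i : ℕ) j with h | h
      · exact Nat.lt_of_lt_of_le (hpos i h) (by simp [Pi.add_apply, Nat.le_add_right])
      · have hieq : i = ⟨j, Nat.lt_of_succ_le hj⟩ :=
          Fin.ext (Nat.le_antisymm (Nat.lt_succ_iff.mp hi) h)
        have h1 : Λ.d f i = 1 := by
          rw [hieq, hfd]; simp [KGraph.eVec]
        rw [Pi.add_apply, h1]; omega
  obtain ⟨mu, hr, hpos, hs⟩ := key k le_rfl
  exact ⟨mu, hr, fun i => hpos i i.isLt, hs⟩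
end

section
/- Let Λ be a row-finite strongly aperiodic k-graph with no sources, and β : Λ^∞ → χ_Λ the map β(x) = {v ∈ Λ^0 : vΛx(n,n) ≠ ∅ for some n ∈ ℕ^k}. Then for every μ ∈ Λ, the image β(Z(μ)) of the cylinder set Z(μ) equals S(s(μ)) = {χ ∈ χ_Λ : s(μ) ∈ χ}. In particular β is an open map for the cylinder topology on Λ^∞ and the topology on χ_Λ generated by the sets S(v). -/
set_option autoImplicit false

open scoped Classical

namespace KGraph

variable {k : ℕ}

/-- An infinite path in `Λ`: a degree-preserving functor `x : Ω_k → Λ`,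
recorded by its values `x(m,n)` for `m ≤ n` in `ℕ^k`. -/
structure InfinitePath (Λ : KGraph k) where
  toFun : (Fin k → ℕ) → (Fin k → ℕ) → Λ.Path
  d_eq : ∀ m n : Fin k → ℕ, m ≤ n → Λ.d (toFun m n) = n - m
  r_eq : ∀ m n : Fin k → ℕ, m ≤ n → Λ.r (toFun m n) = toFun m m
  s_eq : ∀ m n : Fin k → ℕ, m ≤ n → Λ.s (toFun m n) = toFun n n
  comp_eq : ∀ m n p : Fin k → ℕ, m ≤ n → n ≤ p →
    Λ.comp (toFun m n) (toFun n p) = toFun m p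

/-- `β(x) = {v ∈ Λ⁰ : vΛx(n,n) ≠ ∅ for some n ∈ ℕ^k}`. -/
def tailOf (Λ : KGraph k) (x : Λ.InfinitePath) : Set Λ.Path :=
  {v | Λ.IsVertex v ∧ ∃ n : Fin k → ℕ, Λ.Conn v (x.toFun n n)}

/-- the cylinder set `Z(μ) = {x ∈ Λ^∞ : x(0, d(μ)) = μ}`. -/
def cyl (Λ : KGraph k) (mu : Λ.Path) : Set Λ.InfinitePath :=
  {x | x.toFun 0 (Λ.d mu) = mu}

/-- the topology on `Λ^∞` generated by the cylinder sets -/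
instance instTopInfinitePath (Λ : KGraph k) : TopologicalSpace Λ.InfinitePath :=
  TopologicalSpace.generateFrom {U | ∃ mu : Λ.Path, U = Λ.cyl mu}

/-- `χ_Λ`, the set of maximal tails of `Λ` -/
def MaxTail (Λ : KGraph k) : Type := {γ : Set Λ.Path // Λ.MaximalTail γ}

/-- `S(v) = {χ ∈ χ_Λ : v ∈ χ}`. -/
def Sv (Λ : KGraph k) (v : Λ.Path) : Set Λ.MaxTail := {χ | v ∈ χ.1}

/-- the topology on `χ_Λ` generated by the sets `S(v)`, `v ∈ Λ⁰` -/
instance instTopMaxTail (Λ : KGraph k) : TopologicalSpace Λ.MaxTail :=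
  TopologicalSpace.generateFrom {U | ∃ v, Λ.IsVertex v ∧ U = Λ.Sv v}

end KGraph

/-!
Every `x ∈ Z(μ)` passes through `s(μ)`, so `s(μ) ∈ β(x)`. Conversely, given a maximal tail
`χ ∋ s(μ)`, enumerate `χ = {v₀, v₁, …}` (Λ is countable) and extend `μ` step by step inside `χ`:
at step `j` the path grows by at least one in every coordinate and its source is reached from
`vⱼ`, which the directedness of `χ` allows. The prefixes of these paths define an infinite path
`x ∈ Z(μ)` with `β(x) = χ`. Since the cylinders form a basis, `β` is then open.
-/

namespace KGraph

variable {k : ℕ} (Λ : KGraph k)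

section Vertices

variable {Λ}

theorem IsVertex.r_eq_and_s_eq {v : Λ.Path} (hv : Λ.IsVertex v) : Λ.r v = v ∧ Λ.s v = v := by
  have hv : Λ.d v = 0 := hv
  obtain ⟨p, -, hp⟩ := Λ.factor v 0 0 (by rw [hv, add_zero])
  have h : ((Λ.r v, v) : Λ.Path × Λ.Path) = (v, Λ.s v) :=
    (hp _ ⟨Λ.s_r v, Λ.id_comp v, Λ.d_r v, hv⟩).trans
      (hp _ ⟨(Λ.r_s v).symm, Λ.comp_id v, hv, Λ.d_s v⟩).symm
  exact ⟨congrArg Prod.fst h, (congrArg Prod.snd h).symm⟩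

theorem IsVertex.conn_refl {v : Λ.Path} (hv : Λ.IsVertex v) : Λ.Conn v v :=
  ⟨v, hv.r_eq_and_s_eq.1, hv.r_eq_and_s_eq.2⟩

theorem Conn.trans {u v w : Λ.Path} (huv : Λ.Conn u v) (hvw : Λ.Conn v w) : Λ.Conn u w := by
  obtain ⟨a, rfl, rfl⟩ := huv
  obtain ⟨b, hb, rfl⟩ := hvw
  exact ⟨Λ.comp a b, Λ.r_comp a b hb.symm, Λ.s_comp a b hb.symm⟩

end Vertices

section Factorization

noncomputable def split (lam : Λ.Path) (m : Fin k → ℕ) : Λ.Path × Λ.Path :=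
  if h : m ≤ Λ.d lam then
    (Λ.factor lam m (Λ.d lam - m) (add_tsub_cancel_of_le h).symm).exists.choose
  else (lam, lam)

def IsPrefix (a b : Λ.Path) : Prop := ∃ τ, Λ.s a = Λ.r τ ∧ Λ.comp a τ = b

variable {Λ}

theorem split_spec {lam : Λ.Path} {m : Fin k → ℕ} (h : m ≤ Λ.d lam) :
    Λ.s (Λ.split lam m).1 = Λ.r (Λ.split lam m).2 ∧
    Λ.comp (Λ.split lam m).1 (Λ.split lam m).2 = lam ∧
    Λ.d (Λ.split lam m).1 = m ∧ Λ.d (Λ.split lam m).2 = Λ.d lam - m := by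
  rw [split, dif_pos h]
  exact (Λ.factor lam m (Λ.d lam - m) (add_tsub_cancel_of_le h).symm).exists.choose_spec

theorem split_eq {lam a b : Λ.Path} {m : Fin k → ℕ} (hab : Λ.s a = Λ.r b)
    (hlam : Λ.comp a b = lam) (ha : Λ.d a = m) : Λ.split lam m = (a, b) := by
  have hd : Λ.d lam = m + Λ.d b := by rw [← hlam, Λ.d_comp a b hab, ha]
  have hm : m ≤ Λ.d lam := hd ▸ le_self_add
  exact (Λ.factor lam m (Λ.d lam - m) (add_tsub_cancel_of_le hm).symm).unique
    (split_spec hm) ⟨hab, hlam, ha, by rw [hd, add_tsub_cancel_left]⟩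

theorem split_of_d_eq {lam : Λ.Path} {m : Fin k → ℕ} (h : Λ.d lam = m) :
    Λ.split lam m = (lam, Λ.s lam) :=
  split_eq (Λ.r_s lam).symm (Λ.comp_id lam) h

theorem split_zero (lam : Λ.Path) : Λ.split lam 0 = (Λ.r lam, lam) :=
  split_eq (Λ.s_r lam) (Λ.id_comp lam) (Λ.d_r lam)

theorem s_split_snd {lam : Λ.Path} {m : Fin k → ℕ} (h : m ≤ Λ.d lam) :
    Λ.s (Λ.split lam m).2 = Λ.s lam := by
  obtain ⟨hs, hc, -⟩ := split_spec h
  rw [← Λ.s_comp _ _ hs, hc]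

theorem split_comp {a τ : Λ.Path} {m : Fin k → ℕ} (haτ : Λ.s a = Λ.r τ) (hm : m ≤ Λ.d a) :
    Λ.split (Λ.comp a τ) m = ((Λ.split a m).1, Λ.comp (Λ.split a m).2 τ) := by
  obtain ⟨hs, hc, hd, -⟩ := split_spec hm
  have hτ : Λ.s (Λ.split a m).2 = Λ.r τ := (s_split_snd hm).trans haτ
  refine split_eq ?_ ?_ hd
  · rw [Λ.r_comp _ _ hτ, hs]
  · rw [← Λ.comp_assoc _ _ _ hs hτ, hc]

theorem split_split {lam : Λ.Path} {m n : Fin k → ℕ} (hmn : m ≤ n) (hn : n ≤ Λ.d lam) :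
    Λ.split lam m = ((Λ.split (Λ.split lam n).1 m).1,
      Λ.comp (Λ.split (Λ.split lam n).1 m).2 (Λ.split lam n).2) := by
  obtain ⟨hs, hc, hd, -⟩ := split_spec hn
  conv_lhs => rw [← hc]
  exact split_comp hs (by rwa [hd])

theorem IsPrefix.refl (a : Λ.Path) : Λ.IsPrefix a a :=
  ⟨Λ.s a, (Λ.r_s a).symm, Λ.comp_id a⟩

theorem IsPrefix.trans {a b c : Λ.Path} (hab : Λ.IsPrefix a b) (hbc : Λ.IsPrefix b c) :
    Λ.IsPrefix a c := by
  obtain ⟨τ, haτ, rfl⟩ := hab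
  obtain ⟨σ, hτσ, rfl⟩ := hbc
  rw [Λ.s_comp _ _ haτ] at hτσ
  exact ⟨Λ.comp τ σ, haτ.trans (Λ.r_comp _ _ hτσ).symm, (Λ.comp_assoc _ _ _ haτ hτσ).symm⟩

theorem IsPrefix.split_fst {a b : Λ.Path} (hab : Λ.IsPrefix a b) {m : Fin k → ℕ}
    (hm : m ≤ Λ.d a) : (Λ.split b m).1 = (Λ.split a m).1 := by
  obtain ⟨τ, haτ, rfl⟩ := hab
  rw [split_comp haτ hm]

end Factorization

namespace InfinitePath

variable {Λ}

noncomputable def ofPrefixes (p : (Fin k → ℕ) → Λ.Path) (hd : ∀ n, Λ.d (p n) = n)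
    (hp : ∀ m n, m ≤ n → (Λ.split (p n) m).1 = p m) : Λ.InfinitePath where
  toFun m n := (Λ.split (p n) m).2
  d_eq m n h := by
    rw [(split_spec (by rwa [hd])).2.2.2, hd]
  r_eq m n h := by
    rw [← (split_spec (by rwa [hd])).1, hp m n h, split_of_d_eq (hd m)]
  s_eq m n h := by
    rw [s_split_snd (by rwa [hd]), split_of_d_eq (hd n)]
  comp_eq m n q hmn hnq := by
    rw [split_split (lam := p q) hmn (by rwa [hd]), hp n q hnq]

theorem ofPrefixes_toFun_zero (p : (Fin k → ℕ) → Λ.Path) (hd : ∀ n, Λ.d (p n) = n)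
    (hp : ∀ m n, m ≤ n → (Λ.split (p n) m).1 = p m) (n : Fin k → ℕ) :
    (ofPrefixes p hd hp).toFun 0 n = p n := by
  simp only [ofPrefixes, split_zero]

variable (x : Λ.InfinitePath)

theorem d_toFun_zero (n : Fin k → ℕ) : Λ.d (x.toFun 0 n) = n := by
  rw [x.d_eq 0 n zero_le, tsub_zero]

theorem toFun_diag (n : Fin k → ℕ) : x.toFun n n = Λ.s (x.toFun 0 n) :=
  (x.s_eq 0 n zero_le).symm

theorem conn_toFun_diag {m n : Fin k → ℕ} (h : m ≤ n) : Λ.Conn (x.toFun m m) (x.toFun n n) :=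
  ⟨x.toFun m n, x.r_eq m n h, x.s_eq m n h⟩

theorem split_toFun {m n : Fin k → ℕ} (h : m ≤ n) :
    Λ.split (x.toFun 0 n) m = (x.toFun 0 m, x.toFun m n) :=
  split_eq (by rw [x.s_eq 0 m zero_le, x.r_eq m n h]) (x.comp_eq 0 m n zero_le h)
    (x.d_toFun_zero m)

theorem mem_cyl_toFun (n : Fin k → ℕ) : x ∈ Λ.cyl (x.toFun 0 n) := by
  show x.toFun 0 (Λ.d (x.toFun 0 n)) = x.toFun 0 n
  rw [x.d_toFun_zero]

theorem cyl_toFun_subset {m n : Fin k → ℕ} (h : m ≤ n) :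
    Λ.cyl (x.toFun 0 n) ⊆ Λ.cyl (x.toFun 0 m) := by
  intro y (hy : y.toFun 0 (Λ.d (x.toFun 0 n)) = x.toFun 0 n)
  show y.toFun 0 (Λ.d (x.toFun 0 m)) = x.toFun 0 m
  rw [x.d_toFun_zero] at hy ⊢
  have := y.split_toFun h
  rw [hy, x.split_toFun h] at this
  exact (congrArg Prod.fst this).symm

end InfinitePath

theorem exists_infinitePath_of_isPrefix (g : ℕ → Λ.Path)
    (hg : ∀ j, Λ.IsPrefix (g j) (g (j + 1))) (hub : ∀ n, ∃ j, n ≤ Λ.d (g j)) :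
    ∃ x : Λ.InfinitePath, ∀ j, x.toFun 0 (Λ.d (g j)) = g j := by
  have hmono : ∀ i j, i ≤ j → Λ.IsPrefix (g i) (g j) := fun i j hij => by
    induction j, hij using Nat.le_induction with
    | base => exact IsPrefix.refl (g i)
    | succ j _ ih => exact ih.trans (hg j)
  choose J hJ using hub
  have hpre : ∀ n j, n ≤ Λ.d (g j) → (Λ.split (g (J n)) n).1 = (Λ.split (g j) n).1 :=
    fun n j hn => ((hmono _ _ (le_max_right j (J n))).split_fst (hJ n)).symm.trans
      ((hmono _ _ (le_max_left j (J n))).split_fst hn)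
  let p n := (Λ.split (g (J n)) n).1
  have hd : ∀ n, Λ.d (p n) = n := fun n => (split_spec (hJ n)).2.2.1
  have hp : ∀ m n, m ≤ n → (Λ.split (p n) m).1 = p m := fun m n hmn => by
    rw [← congrArg Prod.fst (split_split hmn (hJ n))]
    exact (hpre m _ (hmn.trans (hJ n))).symm
  refine ⟨InfinitePath.ofPrefixes p hd hp, fun j => ?_⟩
  rw [InfinitePath.ofPrefixes_toFun_zero]
  show (Λ.split (g (J _)) _).1 = g j
  rw [hpre _ j le_rfl, split_of_d_eq rfl]

theorem isTopologicalBasis_cyl :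
    TopologicalSpace.IsTopologicalBasis {U : Set Λ.InfinitePath | ∃ mu, U = Λ.cyl mu} where
  exists_subset_inter := by
    rintro _ ⟨μ, rfl⟩ _ ⟨ν, rfl⟩ x ⟨hμ : x.toFun 0 (Λ.d μ) = μ, hν : x.toFun 0 (Λ.d ν) = ν⟩
    refine ⟨_, ⟨_, rfl⟩, x.mem_cyl_toFun (Λ.d μ ⊔ Λ.d ν), Set.subset_inter ?_ ?_⟩
    · conv_rhs => rw [← hμ]
      exact x.cyl_toFun_subset le_sup_left
    · conv_rhs => rw [← hν]
      exact x.cyl_toFun_subset le_sup_right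
  sUnion_eq := Set.sUnion_eq_univ_iff.2 fun x => ⟨_, ⟨_, rfl⟩, x.mem_cyl_toFun 0⟩
  eq_generateFrom := rfl

theorem s_mem_tailOf {mu : Λ.Path} {x : Λ.InfinitePath} (hx : x ∈ Λ.cyl mu) :
    Λ.s mu ∈ Λ.tailOf x :=
  ⟨Λ.d_s mu, Λ.d mu, by rw [x.toFun_diag, hx]; exact IsVertex.conn_refl (Λ.d_s mu)⟩

namespace MaximalTail

variable {Λ} {γ : Set Λ.Path}

theorem exists_path (hγ : Λ.MaximalTail γ) {v : Λ.Path} (hv : v ∈ γ) (n : Fin k → ℕ) :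
    ∃ σ, Λ.r σ = v ∧ Λ.s σ ∈ γ ∧ Λ.d σ = n := by
  obtain ⟨-, hvert, -, hext, -⟩ := hγ
  let P (n : Fin k → ℕ) : Prop := ∀ v ∈ γ, ∃ σ, Λ.r σ = v ∧ Λ.s σ ∈ γ ∧ Λ.d σ = n
  have hzero : P 0 := fun v hv => by
    obtain ⟨hr, hs⟩ := (hvert v hv).r_eq_and_s_eq
    exact ⟨v, hr, hs.symm ▸ hv, hvert v hv⟩
  have hadd : ∀ a b, P a → P b → P (a + b) := fun a b ha hb v hv => by
    obtain ⟨σ, rfl, hσ, rfl⟩ := ha v hv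
    obtain ⟨τ, hτ, hτγ, rfl⟩ := hb _ hσ
    exact ⟨Λ.comp σ τ, Λ.r_comp _ _ hτ.symm, (Λ.s_comp _ _ hτ.symm).symm ▸ hτγ,
      Λ.d_comp _ _ hτ.symm⟩
  have hsingle : ∀ i c, P (Pi.single i c) := fun i c => by
    induction c with
    | zero => rw [Pi.single_zero]; exact hzero
    | succ c ih =>
      rw [Pi.single_add]
      refine hadd _ _ ih fun v hv => ?_
      obtain ⟨e, he, hed, heγ⟩ := hext v hv i
      exact ⟨e, he, heγ, hed⟩
  have := Finset.sum_induction (s := Finset.univ) _ P hadd hzero fun i _ => hsingle i (n i)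
  rw [Finset.univ_sum_single] at this
  exact this v hv

theorem exists_extension (hγ : Λ.MaximalTail γ) {u w : Λ.Path} (hu : u ∈ γ) (hw : w ∈ γ) :
    ∃ τ, Λ.r τ = u ∧ Λ.s τ ∈ γ ∧ 1 ≤ Λ.d τ ∧ Λ.Conn w (Λ.s τ) := by
  obtain ⟨u', hu', ⟨τ, hτr, hτs⟩, hwu'⟩ := hγ.2.2.1 u hu w hw
  obtain ⟨σ, hσ, hσγ, hσd⟩ := hγ.exists_path hu' 1
  have hτσ : Λ.s τ = Λ.r σ := hτs.trans hσ.symm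
  refine ⟨Λ.comp τ σ, (Λ.r_comp _ _ hτσ).trans hτr, (Λ.s_comp _ _ hτσ).symm ▸ hσγ, ?_, ?_⟩
  · rw [Λ.d_comp _ _ hτσ, hσd]
    exact le_add_self
  · rw [Λ.s_comp _ _ hτσ]
    exact hwu'.trans ⟨σ, hσ, rfl⟩

theorem exists_tailOf_eq (hγ : Λ.MaximalTail γ) {mu : Λ.Path} (hmu : Λ.s mu ∈ γ) :
    ∃ x ∈ Λ.cyl mu, Λ.tailOf x = γ := by
  have := Λ.countable
  obtain ⟨f, hf⟩ := (Set.to_countable γ).exists_eq_range ⟨_, hmu⟩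
  have hfγ : ∀ j, f j ∈ γ := fun j => hf ▸ Set.mem_range_self j
  choose! τ hτr hτγ hτd hτc using fun j (u : Λ.Path) (hu : u ∈ γ) =>
    hγ.exists_extension hu (hfγ j)
  let g (j : ℕ) : Λ.Path := Nat.rec mu (fun j a => Λ.comp a (τ j (Λ.s a))) j
  have hgs : ∀ j, Λ.s (g j) ∈ γ → Λ.s (g (j + 1)) = Λ.s (τ j (Λ.s (g j))) :=
    fun j h => Λ.s_comp _ _ (hτr j _ h).symm
  have hgγ : ∀ j, Λ.s (g j) ∈ γ := fun j => by
    induction j with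
    | zero => exact hmu
    | succ j ih => exact (hgs j ih).symm ▸ hτγ j _ ih
  have hg : ∀ j, Λ.IsPrefix (g j) (g (j + 1)) := fun j => ⟨_, (hτr j _ (hgγ j)).symm, rfl⟩
  have hgd : ∀ j i, j ≤ Λ.d (g j) i := fun j i => by
    induction j with
    | zero => exact Nat.zero_le _
    | succ j ih =>
      show j + 1 ≤ Λ.d (Λ.comp (g j) (τ j (Λ.s (g j)))) i
      rw [Λ.d_comp _ _ (hτr j _ (hgγ j)).symm]
      exact Nat.add_le_add ih (hτd j _ (hgγ j) i)
  have hub : ∀ n, ∃ j, n ≤ Λ.d (g j) := fun n =>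
    ⟨Finset.univ.sup n, fun i => (Finset.le_sup (Finset.mem_univ i)).trans (hgd _ i)⟩
  obtain ⟨x, hx⟩ := Λ.exists_infinitePath_of_isPrefix g hg hub
  have hdiag : ∀ j, x.toFun (Λ.d (g j)) (Λ.d (g j)) = Λ.s (g j) := fun j => by
    rw [x.toFun_diag, hx]
  refine ⟨x, hx 0, Set.ext fun v => ⟨?_, fun hv => ?_⟩⟩
  · rintro ⟨hv, n, hvn⟩
    obtain ⟨j, hj⟩ := hub n
    have hnj := x.conn_toFun_diag hj
    rw [hdiag] at hnj
    exact hγ.2.2.2.2 v hv _ (hgγ j) (hvn.trans hnj)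
  · obtain ⟨j, rfl⟩ : v ∈ Set.range f := hf ▸ hv
    refine ⟨hγ.2.1 _ hv, Λ.d (g (j + 1)), ?_⟩
    rw [hdiag (j + 1), hgs j (hgγ j)]
    exact hτc j _ (hgγ j)

end MaximalTail

theorem image_cyl_eq_Sv {B : Λ.InfinitePath → Λ.MaxTail} (hB : ∀ x, (B x).1 = Λ.tailOf x)
    (mu : Λ.Path) : B '' Λ.cyl mu = Λ.Sv (Λ.s mu) := by
  ext χ
  constructor
  · rintro ⟨x, hx, rfl⟩
    show Λ.s mu ∈ (B x).1
    rw [hB]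
    exact Λ.s_mem_tailOf hx
  · intro (hχ : Λ.s mu ∈ χ.1)
    obtain ⟨x, hx, hxχ⟩ := χ.2.exists_tailOf_eq hχ
    exact ⟨x, hx, Subtype.ext ((hB x).trans hxχ)⟩

end KGraph

theorem stmt13_general {k : ℕ} (Λ : KGraph k) (B : Λ.InfinitePath → Λ.MaxTail)
    (hB : ∀ x, (B x).1 = Λ.tailOf x) :
    (∀ mu : Λ.Path, B '' (Λ.cyl mu) = Λ.Sv (Λ.s mu)) ∧ IsOpenMap B := by
  refine ⟨Λ.image_cyl_eq_Sv hB, Λ.isTopologicalBasis_cyl.isOpenMap_iff.2 ?_⟩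
  rintro _ ⟨mu, rfl⟩
  rw [Λ.image_cyl_eq_Sv hB]
  exact TopologicalSpace.isOpen_generateFrom_of_mem ⟨Λ.s mu, Λ.d_s mu, rfl⟩

/-- `β(Z(μ)) = S(s(μ))` for every `μ ∈ Λ`; in particular `β` is an open
map. -/
theorem stmt13 {k : ℕ} (Λ : KGraph k) (hrf : Λ.RowFinite) (hns : Λ.NoSources)
    (hsa : Λ.StronglyAperiodic) (B : Λ.InfinitePath → Λ.MaxTail)
    (hB : ∀ x, (B x).1 = Λ.tailOf x) :
    (∀ mu : Λ.Path, B '' (Λ.cyl mu) = Λ.Sv (Λ.s mu)) ∧ IsOpenMap B :=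
  stmt13_general Λ B hB
end

section
/- Let Λ be a row-finite strongly aperiodic k-graph with no sources, and give χ_Λ the topology generated by the sets S(v) = {χ ∈ χ_Λ : v ∈ χ}, v ∈ Λ^0. Then for every subset S ⊆ χ_Λ, the closure of S equals {δ ∈ χ_Λ : δ ⊆ ⋃_{γ ∈ S} γ}. -/
set_option autoImplicit false

open scoped Classical

/-- The closure of `S ⊆ χ_Λ` is `{δ ∈ χ_Λ : δ ⊆ ⋃_{γ ∈ S} γ}`. -/
theorem stmt17 {k : ℕ} (Λ : KGraph k) (hrf : Λ.RowFinite) (hns : Λ.NoSources)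
    (hsa : Λ.StronglyAperiodic) (S : Set Λ.MaxTail) :
    closure S = {δ : Λ.MaxTail | δ.1 ⊆ ⋃ γ ∈ S, γ.1} := by
  ext δ
  simp only [Set.mem_setOf_eq]
  constructor
  · intro hδ v hv
    have hvert : Λ.IsVertex v := δ.2.2.1 v hv
    have hopen : IsOpen (Λ.Sv v) :=
      TopologicalSpace.isOpen_generateFrom_of_mem ⟨v, hvert, rfl⟩
    obtain ⟨γ, hγU, hγS⟩ := mem_closure_iff.mp hδ _ hopen hv
    exact Set.mem_biUnion hγS hγU
  · intro hsub
    rw [mem_closure_iff]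
    intro U hU hδU
    have key : ∀ U : Set Λ.MaxTail,
        TopologicalSpace.GenerateOpen {U | ∃ v, Λ.IsVertex v ∧ U = Λ.Sv v} U →
        δ ∈ U → ∃ w ∈ δ.1, ∀ γ : Λ.MaxTail, w ∈ γ.1 → γ ∈ U := by
      intro U hU
      induction hU with
      | basic u hu =>
        rintro hδu
        obtain ⟨v, hv, rfl⟩ := hu
        exact ⟨v, hδu, fun γ h => h⟩
      | univ =>
        intro _
        obtain ⟨w, hw⟩ := δ.2.1
        exact ⟨w, hw, fun _ _ => trivial⟩
      | inter u v _ _ ihu ihv =>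
        rintro ⟨hu, hv⟩
        obtain ⟨w₁, hw₁, h₁⟩ := ihu hu
        obtain ⟨w₂, hw₂, h₂⟩ := ihv hv
        obtain ⟨w, hw, hc₁, hc₂⟩ := δ.2.2.2.1 w₁ hw₁ w₂ hw₂
        refine ⟨w, hw, fun γ hγ => ⟨h₁ γ ?_, h₂ γ ?_⟩⟩
        · exact γ.2.2.2.2.2 w₁ (δ.2.2.1 w₁ hw₁) w hγ hc₁
        · exact γ.2.2.2.2.2 w₂ (δ.2.2.1 w₂ hw₂) w hγ hc₂
      | sUnion T _ ih =>
        rintro ⟨t, ht, hδt⟩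
        obtain ⟨w, hw, h⟩ := ih t ht hδt
        exact ⟨w, hw, fun γ hγ => Set.mem_sUnion.mpr ⟨t, ht, h γ hγ⟩⟩
    obtain ⟨w, hw, h⟩ := key U hU hδU
    obtain ⟨γ, hγS, hwγ⟩ := Set.mem_iUnion₂.mp (hsub hw)
    exact ⟨γ, h γ hwγ, hγS⟩
end

section
/- Let Λ be a row-finite strongly aperiodic k-graph with no sources, and give χ_Λ the topology generated by the sets S(v) = {χ ∈ χ_Λ : v ∈ χ}. Then every nonempty irreducible closed subset of χ_Λ is the closure of a point; that is, χ_Λ is a quasi-sober topological space. -/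
set_option autoImplicit false

open scoped Classical

lemma KGraph.open_mono {k : ℕ} (Λ : KGraph k) {U : Set Λ.MaxTail} (hU : IsOpen U)
    {a b : Λ.MaxTail} (hab : a.1 ⊆ b.1) (ha : a ∈ U) : b ∈ U := by
  have hU' : TopologicalSpace.GenerateOpen
      {U | ∃ v, Λ.IsVertex v ∧ U = Λ.Sv v} U := hU
  clear hU
  induction hU' with
  | basic u hu =>
    obtain ⟨v, hv, rfl⟩ := hu
    exact hab ha
  | univ => trivial
  | inter u v _ _ ihu ihv => exact ⟨ihu ha.1, ihv ha.2⟩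
  | sUnion s _ ih =>
    obtain ⟨t, ht, hat⟩ := ha
    exact ⟨t, ht, ih t ht hat⟩

lemma KGraph.isOpen_Sv {k : ℕ} (Λ : KGraph k) {v : Λ.Path} (hv : Λ.IsVertex v) :
    IsOpen (Λ.Sv v) :=
  TopologicalSpace.GenerateOpen.basic _ ⟨v, hv, rfl⟩

/-- `χ_Λ` is quasi-sober: every nonempty irreducible closed subset is the
closure of a point. -/
theorem stmt19 {k : ℕ} (Λ : KGraph k) (hrf : Λ.RowFinite) (hns : Λ.NoSources)
    (hsa : Λ.StronglyAperiodic) :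
    QuasiSober Λ.MaxTail := by
  constructor
  intro S hirr hcl
  -- the union of all tails in S
  set g : Set Λ.Path := ⋃ χ ∈ S, (χ : Λ.MaxTail).1 with hg
  have hmemg : ∀ v, v ∈ g ↔ ∃ χ ∈ S, v ∈ (χ : Λ.MaxTail).1 := by
    intro v; simp [hg]
  -- g is a maximal tail
  have hgmt : Λ.MaximalTail g := by
    refine ⟨?_, ?_, ?_, ?_, ?_⟩
    · obtain ⟨χ, hχ⟩ := hirr.1
      obtain ⟨v, hv⟩ := χ.2.1
      exact ⟨v, (hmemg v).2 ⟨χ, hχ, hv⟩⟩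
    · intro v hv
      obtain ⟨χ, _, hvχ⟩ := (hmemg v).1 hv
      exact χ.2.2.1 v hvχ
    · intro v₁ hv₁ v₂ hv₂
      obtain ⟨χ₁, hχ₁, hv₁'⟩ := (hmemg v₁).1 hv₁
      obtain ⟨χ₂, hχ₂, hv₂'⟩ := (hmemg v₂).1 hv₂
      have hvert₁ := χ₁.2.2.1 v₁ hv₁'
      have hvert₂ := χ₂.2.2.1 v₂ hv₂'
      have h := hirr.2 (Λ.Sv v₁) (Λ.Sv v₂) (Λ.isOpen_Sv hvert₁)
        (Λ.isOpen_Sv hvert₂) ⟨χ₁, hχ₁, hv₁'⟩ ⟨χ₂, hχ₂, hv₂'⟩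
      obtain ⟨χ, hχS, hχ1, hχ2⟩ := h
      obtain ⟨w, hw, hc1, hc2⟩ := χ.2.2.2.1 v₁ hχ1 v₂ hχ2
      exact ⟨w, (hmemg w).2 ⟨χ, hχS, hw⟩, hc1, hc2⟩
    · intro v hv i
      obtain ⟨χ, hχ, hvχ⟩ := (hmemg v).1 hv
      obtain ⟨f, hf1, hf2, hf3⟩ := χ.2.2.2.2.1 v hvχ i
      exact ⟨f, hf1, hf2, (hmemg _).2 ⟨χ, hχ, hf3⟩⟩
    · intro v hv w hw hconn
      obtain ⟨χ, hχ, hwχ⟩ := (hmemg w).1 hw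
      exact (hmemg v).2 ⟨χ, hχ, χ.2.2.2.2.2 v hv w hwχ hconn⟩
  set γ : Λ.MaxTail := ⟨g, hgmt⟩ with hγ
  -- every tail in S is contained in g
  have hsub : ∀ χ ∈ S, (χ : Λ.MaxTail).1 ⊆ g := by
    intro χ hχ v hv
    exact (hmemg v).2 ⟨χ, hχ, hv⟩
  -- γ ∈ S
  have hγS : γ ∈ S := by
    rw [← hcl.closure_eq]
    have hbasis := TopologicalSpace.isTopologicalBasis_of_subbasis
      (t := Λ.instTopMaxTail)
      (s := {U | ∃ v, Λ.IsVertex v ∧ U = Λ.Sv v}) rfl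
    rw [hbasis.mem_closure_iff]
    rintro o ⟨f, ⟨hfin, hfsub⟩, rfl⟩ hγo
    have heach : ∀ u ∈ hfin.toFinset, IsOpen u := by
      intro u hu
      rw [Set.Finite.mem_toFinset] at hu
      obtain ⟨v, hv, rfl⟩ := hfsub hu
      exact Λ.isOpen_Sv hv
    have hmeet : ∀ u ∈ hfin.toFinset, (S ∩ u).Nonempty := by
      intro u hu
      rw [Set.Finite.mem_toFinset] at hu
      obtain ⟨v, hv, rfl⟩ := hfsub hu
      have : v ∈ g := hγo _ hu
      obtain ⟨χ, hχ, hvχ⟩ := (hmemg v).1 this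
      exact ⟨χ, hχ, hvχ⟩
    have := (isIrreducible_iff_sInter.1 hirr) hfin.toFinset heach hmeet
    rw [Set.Finite.coe_toFinset] at this
    obtain ⟨x, hxS, hxo⟩ := this
    exact ⟨x, hxo, hxS⟩
  refine ⟨γ, ?_⟩
  apply le_antisymm
  · exact closure_minimal (Set.singleton_subset_iff.2 hγS) hcl
  · intro χ hχ
    rw [mem_closure_iff]
    intro U hU hχU
    exact ⟨γ, Λ.open_mono hU (hsub χ hχ) hχU, rfl⟩
end
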